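/- arXiv:2108.06832 — 4 statements merged into one kernel-verified Lean document; each statement's English description precedes it below -/
import Mathlib

section
/- For any 14-tile H and compatible knowledge base KB, the knowledge-aware deficiency dfncy(H, KB) equals the minimum of cost(π, KB) over all quasi-decompositions π of H under KB. -/
attribute [local instance] Classical.propDecidable

/-- A Mahjong tile: a colour in {0,1,2} and a number in {1,...,9}. -/
abbrev Tile : Type := Fin 3 × Fin 9

/-- A `k`-tile: a multiset of `k` tiles in which no tile occurs more than 4 times. -/
def IsKTile (k : ℕ) (H : Multiset Tile) : Prop :=
  Multiset.card H = k ∧ ∀ t : Tile, H.count t ≤ 4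

/-- A pong: three identical tiles. -/
def IsPong (s : Multiset Tile) : Prop := ∃ t : Tile, s = {t, t, t}

/-- A chow: three consecutive tiles of the same colour. -/
def IsChow (s : Multiset Tile) : Prop :=
  ∃ (c : Fin 3) (i j k : Fin 9),
    (j : ℕ) = (i : ℕ) + 1 ∧ (k : ℕ) = (i : ℕ) + 2 ∧ s = {(c, i), (c, j), (c, k)}

/-- A meld: a pong or a chow. -/
def IsMeld (s : Multiset Tile) : Prop := IsPong s ∨ IsChow s

/-- A pair: two identical tiles. -/
def IsPair (s : Multiset Tile) : Prop := ∃ t : Tile, s = {t, t}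

/-- A pchow: two tiles that become a chow after adding one appropriate tile. -/
def IsPchow (s : Multiset Tile) : Prop := ∃ t : Tile, IsChow (t ::ₘ s)

/-- A pmeld: a pchow or a pair. -/
def IsPmeld (s : Multiset Tile) : Prop := IsPchow s ∨ IsPair s

/-- `π` is a decomposition of `H` into four melds and one pair (the eye). -/
def IsDecompOf (π : Fin 5 → Multiset Tile) (H : Multiset Tile) : Prop :=
  (∑ i, π i) = H ∧ (∀ i : Fin 5, (i : ℕ) < 4 → IsMeld (π i)) ∧ IsPair (π 4)

/-- A 14-tile is complete (winning) if it decomposes into four melds and one pair. -/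
def Complete (H : Multiset Tile) : Prop := ∃ π : Fin 5 → Multiset Tile, IsDecompOf π H

/-- `H[t/t']`: replace one copy of `t` in `H` by `t'`. -/
def replaceTile (H : Multiset Tile) (t t' : Tile) : Multiset Tile := t' ::ₘ H.erase t

/-- `Reach H k`: `H` can be made complete with `k` (legal) tile changes. -/
inductive Reach : Multiset Tile → ℕ → Prop
  | zero {H : Multiset Tile} : Complete H → Reach H 0
  | succ {H : Multiset Tile} {l : ℕ} (t t' : Tile) :
      t ∈ H → (∀ s : Tile, (replaceTile H t t').count s ≤ 4) →
      Reach (replaceTile H t t') l → Reach H (l + 1)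

/-- The (plain) deficiency number of a 14-tile. -/
noncomputable def dfncy (H : Multiset Tile) : ℕ∞ :=
  sInf {c : ℕ∞ | ∃ k : ℕ, Reach H k ∧ c = (k : ℕ∞)}

/-- A knowledge base assigns each tile kind a multiplicity in {0,...,4}. -/
def IsKB (KB : Tile → ℕ) : Prop := ∀ t : Tile, KB t ≤ 4

/-- `H` and `KB` are compatible: each tile occurs at most 4 times in total. -/
def KBCompatible (H : Multiset Tile) (KB : Tile → ℕ) : Prop :=
  ∀ t : Tile, H.count t + KB t ≤ 4

/-- `KB ⊖ t`: remove one copy of `t` from the knowledge base. -/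
noncomputable def kbRemove (KB : Tile → ℕ) (t : Tile) : Tile → ℕ :=
  Function.update KB t (KB t - 1)

/-- `ReachKB H KB k`: `H` can be made complete with `k` tile changes,
replacement tiles being drawn from (and removed from) `KB`. -/
inductive ReachKB : Multiset Tile → (Tile → ℕ) → ℕ → Prop
  | zero {H : Multiset Tile} {KB : Tile → ℕ} : Complete H → ReachKB H KB 0
  | succ {H : Multiset Tile} {KB : Tile → ℕ} {l : ℕ} (t t' : Tile) :
      t ∈ H → 0 < KB t' →
      ReachKB (replaceTile H t t') (kbRemove KB t') l → ReachKB H KB (l + 1)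

/-- The knowledge-aware deficiency number of a 14-tile (⊤ if incompletable). -/
noncomputable def dfncyKB (H : Multiset Tile) (KB : Tile → ℕ) : ℕ∞ :=
  sInf {c : ℕ∞ | ∃ k : ℕ, ReachKB H KB k ∧ c = (k : ℕ∞)}

/-- A pre-decomposition (pDCMP) of `H`: five pairwise disjoint sub-multisets of `H`;
the last is a pair, a single tile, or empty; each of the first four is a meld,
a pmeld, a single tile, or empty. -/
def IsPDCMP (H : Multiset Tile) (π : Fin 5 → Multiset Tile) : Prop :=
  (∑ i, π i) ≤ H ∧
  (IsPair (π 4) ∨ Multiset.card (π 4) ≤ 1) ∧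
  (∀ i : Fin 5, (i : ℕ) < 4 →
    IsMeld (π i) ∨ IsPmeld (π i) ∨ Multiset.card (π i) ≤ 1)

/-- A pDCMP is completable if some decomposition (four melds and a pair, using
each tile at most 4 times in total) is finer than it. -/
def PDCompletable (π : Fin 5 → Multiset Tile) : Prop :=
  ∃ ρ : Fin 5 → Multiset Tile, (∀ i, π i ≤ ρ i) ∧
    (∀ i : Fin 5, (i : ℕ) < 4 → IsMeld (ρ i)) ∧ IsPair (ρ 4) ∧
    (∀ t : Tile, (∑ i, ρ i).count t ≤ 4)

/-- The cost of a pDCMP: the number of missing tiles needed to complete it;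
infinite if it is incompletable. -/
noncomputable def pdCost (π : Fin 5 → Multiset Tile) : ℕ∞ :=
  if PDCompletable π then ((14 - ∑ i, Multiset.card (π i) : ℕ) : ℕ∞) else ⊤

/-- A pmeld `s` is completable under `KB` if `KB` has a tile completing it into a meld. -/
def CompletablePmeld (KB : Tile → ℕ) (s : Multiset Tile) : Prop :=
  ∃ t : Tile, 0 < KB t ∧ IsMeld (t ::ₘ s)

/-- A quasi-decomposition (qDCMP) of `H` under `KB`: at most five pairwise disjoint
sub-multisets of `H`, each a meld, pair, or pchow; every pchow completable under `KB`;
at most one incompletable pair; and containing a pair if it has five elements. -/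
def IsQDCMP (KB : Tile → ℕ) (H : Multiset Tile) (π : Multiset (Multiset Tile)) : Prop :=
  Multiset.card π ≤ 5 ∧
  π.sum ≤ H ∧
  (∀ s ∈ π, IsMeld s ∨ IsPair s ∨ IsPchow s) ∧
  (∀ s ∈ π, IsPchow s → CompletablePmeld KB s) ∧
  Multiset.card (π.filter fun s => IsPair s ∧ ¬ CompletablePmeld KB s) ≤ 1 ∧
  (Multiset.card π = 5 → ∃ s ∈ π, IsPair s)

/-- The remainder of `π` in `H`: the tiles of `H` not used by `π`. -/
def remainderOf (H : Multiset Tile) (π : Multiset (Multiset Tile)) : Multiset Tile :=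
  H - π.sum

/-- A completion scheme `P` for a qDCMP `π` of `H` under `KB`: five groups, each a
base plus tiles borrowed from `KB`; every part of `π` is a base; every other base is
a seed of at most one tile recycled from the remainder; borrowed tiles respect the
multiplicities of `KB`; the groups form four melds and one pair (the eye). -/
def IsQCompletion (KB : Tile → ℕ) (H : Multiset Tile) (π : Multiset (Multiset Tile))
    (P : Multiset (Multiset Tile × Multiset Tile)) : Prop :=
  Multiset.card P = 5 ∧
  π ≤ P.map Prod.fst ∧
  (∀ s ∈ P.map Prod.fst - π, Multiset.card s ≤ 1) ∧
  (P.map Prod.fst - π).sum ≤ remainderOf H π ∧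
  (∀ t : Tile, ((P.map Prod.snd).sum).count t ≤ KB t) ∧
  (∃ q ∈ P, IsPair (q.1 + q.2) ∧ ∀ r ∈ P.erase q, IsMeld (r.1 + r.2))

/-- The cost of a qDCMP under `KB`: the minimum number of tiles borrowed from `KB`
over all completion schemes (⊤ if `π` is incompletable). -/
noncomputable def qCost (KB : Tile → ℕ) (H : Multiset Tile)
    (π : Multiset (Multiset Tile)) : ℕ∞ :=
  sInf {c : ℕ∞ | ∃ P : Multiset (Multiset Tile × Multiset Tile),
    IsQCompletion KB H π P ∧ c = (Multiset.card (P.map Prod.snd).sum : ℕ∞)}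

/-- `m`: the number of melds in `π`. -/
noncomputable def attrM (π : Multiset (Multiset Tile)) : ℕ :=
  Multiset.card (π.filter IsMeld)

/-- `n`: the number of pmelds (pchows and pairs) in `π`. -/
noncomputable def attrN (π : Multiset (Multiset Tile)) : ℕ :=
  Multiset.card (π.filter IsPmeld)

/-- `p`: the number of pairs in `π`. -/
noncomputable def attrP (π : Multiset (Multiset Tile)) : ℕ :=
  Multiset.card (π.filter IsPair)

/-- `e`: the number of pairs in `π` incompletable under `KB`. -/
noncomputable def attrE (KB : Tile → ℕ) (π : Multiset (Multiset Tile)) : ℕ :=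
  Multiset.card (π.filter fun s => IsPair s ∧ ¬ CompletablePmeld KB s)

/-- `re = 1` iff the remainder has a tile with an identical copy in `KB`. -/
noncomputable def attrRe (KB : Tile → ℕ) (H : Multiset Tile)
    (π : Multiset (Multiset Tile)) : ℕ :=
  if ∃ t ∈ remainderOf H π, 0 < KB t then 1 else 0

/-- A tile `t` can be extended into a meld using two tiles available in `KB`. -/
def CanStartMeld (KB : Tile → ℕ) (t : Tile) : Prop :=
  ∃ v : Multiset Tile, Multiset.card v = 2 ∧ (∀ s : Tile, v.count s ≤ KB s) ∧
    IsMeld (t ::ₘ v)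

/-- `rm = 1` iff the remainder has a tile that can evolve into a meld given `KB`. -/
noncomputable def attrRm (KB : Tile → ℕ) (H : Multiset Tile)
    (π : Multiset (Multiset Tile)) : ℕ :=
  if ∃ t ∈ remainderOf H π, CanStartMeld KB t then 1 else 0

/-- One can simultaneously start the eye from one tile of `R` and a meld from another
tile of `R`, jointly respecting the multiplicities of `KB`. -/
def CanEyeAndMeld (KB : Tile → ℕ) (R : Multiset Tile) : Prop :=
  ∃ (t₁ t₂ : Tile) (u v : Multiset Tile),
    t₁ ::ₘ ({t₂} : Multiset Tile) ≤ R ∧ Multiset.card u = 1 ∧ Multiset.card v = 2 ∧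
    (∀ s : Tile, (u + v).count s ≤ KB s) ∧ IsPair (t₁ ::ₘ u) ∧ IsMeld (t₂ ::ₘ v)

/-- `em = 1` iff `e = 0`, `re = rm = 1`, and there is an eye-meld conflict. -/
noncomputable def attrEm (KB : Tile → ℕ) (H : Multiset Tile)
    (π : Multiset (Multiset Tile)) : ℕ :=
  if attrE KB π = 0 ∧ attrRe KB H π = 1 ∧ attrRm KB H π = 1 ∧
      ¬ CanEyeAndMeld KB (remainderOf H π) then 1 else 0

/-- `ke = 1` iff the knowledge base contains a pair. -/
noncomputable def kbKe (KB : Tile → ℕ) : ℕ :=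
  if ∃ t : Tile, 2 ≤ KB t then 1 else 0

/-- `km = 1` iff the knowledge base contains a meld. -/
noncomputable def kbKm (KB : Tile → ℕ) : ℕ :=
  if ∃ s : Multiset Tile, IsMeld s ∧ ∀ t : Tile, s.count t ≤ KB t then 1 else 0

/-- Two tiles are KB-connected (w.r.t. `H` and `KB`): equal, or some tile of `H` or
`KB` makes a chow together with them. -/
def KBConn (KB : Tile → ℕ) (H : Multiset Tile) (t t' : Tile) : Prop :=
  t = t' ∨ ∃ u : Tile, (u ∈ H ∨ 0 < KB u) ∧ IsChow {t, t', u}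

/-- A KB-block of `H`: a nonempty monochromatic sub-multiset of `H`, closed under
KB-connection within `H` (with full multiplicities) and KB-connected within `H`. -/
def IsKBBlock (KB : Tile → ℕ) (H : Multiset Tile) (b : Multiset Tile) : Prop :=
  b ≠ 0 ∧ b ≤ H ∧ (∃ c : Fin 3, ∀ t ∈ b, t.1 = c) ∧
  (∀ t ∈ b, ∀ t' : Tile, KBConn KB H t t' → H.count t' ≤ b.count t') ∧
  (∀ t ∈ b, ∀ t' ∈ b,
    Relation.ReflTransGen (fun x y : Tile => y ∈ H ∧ KBConn KB H x y) t t')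

/-- The restriction `π↓b` of a qDCMP `π` to a block `b`: the melds and pmelds of `π`
contained in `b`. -/
noncomputable def restrictQ (π : Multiset (Multiset Tile)) (b : Multiset Tile) :
    Multiset (Multiset Tile) :=
  π.filter fun s => s ≤ b

/-- The `Decide` function: the cost assigned to a (global) type, where 100 plays the
role of infinity. -/
noncomputable def Decide (m n p e re rm em ke km : ℕ) : ℕ :=
  if (p = 0 ∧ re = 0 ∧ ke = 0) ∨
     (m + n ≤ 4 ∧ re = 0 ∧ ke = 0 ∧ rm = 0 ∧ km = 0) ∨
     (m + n ≤ 3 + e ∧ rm = 0 ∧ km = 0) ∨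
     (m + n ≤ 3 ∧ p = 0 ∧ ke = 0 ∧ km = 0 ∧ em = 1) then 100
  else if 4 < m + n then 4 - m
  else if m + n = 4 then
    if (e = 0 ∧ re = 1) ∨ (0 < p ∧ rm = 1) then 4 - m + 1 else 4 - m + 2
  else
    if e = 1 then (n - 1) + (2 * rm + 3 * (1 - rm)) * (4 - m - n + 1)
    else if p = 0 then
      n + (2 * rm + 3 * (1 - rm)) * (4 - m - n) + (re + 2 * (1 - re)) + em
    else
      min (n + (2 * rm + 3 * (1 - rm)) * (4 - m - n) + (re + 2 * (1 - re)))
          (n - 1 + (2 * rm + 3 * (1 - rm)) * (4 - m - n + 1))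

/-- The value returned by the block deficiency algorithm: the minimum, over all
choices of one local qDCMP per KB-block (whose joined global type is not discarded),
of the cost `Decide` assigns to the joined global type. -/
noncomputable def blockDfncy (KB : Tile → ℕ) (H : Multiset Tile)
    (B : Finset (Multiset Tile)) : ℕ :=
  sInf {c : ℕ | ∃ f : Multiset Tile → Multiset (Multiset Tile),
    (∀ b ∈ B, IsQDCMP KB b (f b)) ∧
    (∑ b ∈ B, attrE KB (f b)) ≤ 1 ∧
    (∑ b ∈ B, attrM (f b)) + (∑ b ∈ B, attrN (f b)) ≤ 5 ∧
    ¬((∑ b ∈ B, attrM (f b)) + (∑ b ∈ B, attrN (f b)) = 5 ∧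
       (∑ b ∈ B, attrP (f b)) = 0) ∧
    c = Decide (∑ b ∈ B, attrM (f b)) (∑ b ∈ B, attrN (f b))
          (∑ b ∈ B, attrP (f b)) (∑ b ∈ B, attrE KB (f b))
          (B.sup fun b => attrRe KB b (f b)) (B.sup fun b => attrRm KB b (f b))
          (if ∃ b ∈ B, attrEm KB b (f b) = 1 ∧
              ∀ b' ∈ B, b' ≠ b → attrRe KB b' (f b') = 0 ∧ attrRm KB b' (f b') = 0
           then 1 else 0)
          (kbKe KB) (kbKm KB)}


section Lemmas

lemma msum_le_msum {s t : Multiset (Multiset Tile)} (h : s ≤ t) : s.sum ≤ t.sum := by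
  obtain ⟨u, rfl⟩ := Multiset.le_iff_exists_add.mp h
  simp [Multiset.sum_add]

lemma card_of_pong {s : Multiset Tile} (h : IsPong s) : Multiset.card s = 3 := by
  obtain ⟨t, rfl⟩ := h; rfl

lemma card_of_meld {s : Multiset Tile} (h : IsMeld s) : Multiset.card s = 3 := by
  rcases h with ⟨t, rfl⟩ | ⟨c, i, j, k, _, _, rfl⟩ <;> rfl

lemma card_of_pair {s : Multiset Tile} (h : IsPair s) : Multiset.card s = 2 := by
  obtain ⟨t, rfl⟩ := h; rfl

lemma complete_card {X : Multiset Tile} (h : Complete X) : Multiset.card X = 14 := by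
  obtain ⟨π, hsum, hm, hp⟩ := h
  rw [← hsum, Fin.sum_univ_five]
  simp only [Multiset.card_add]
  rw [card_of_meld (hm 0 (by decide)), card_of_meld (hm 1 (by decide)),
    card_of_meld (hm 2 (by decide)), card_of_meld (hm 3 (by decide)),
    card_of_pair hp]

end Lemmas

lemma toReach : ∀ (k : ℕ) (B W H : Multiset Tile) (KB : Tile → ℕ),
    Multiset.card H = 14 → B ≤ H → (∀ s : Tile, W.count s ≤ KB s) →
    Multiset.card W = k → Complete (B + W) → ReachKB H KB k := by
  intro k
  induction k with
  | zero =>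
    intro B W H KB hcard hBH hW hcW hC
    have hW0 : W = 0 := Multiset.card_eq_zero.mp hcW
    subst hW0
    rw [add_zero] at hC
    have hcB : Multiset.card B = 14 := complete_card hC
    have : B = H := Multiset.eq_of_le_of_card_le hBH (by omega)
    exact ReachKB.zero (this ▸ hC)
  | succ k ih =>
    intro B W H KB hcard hBH hW hcW hC
    -- pick t' ∈ W
    obtain ⟨t', ht'⟩ := Multiset.card_pos_iff_exists_mem.mp (by omega : 0 < Multiset.card W)
    -- card B = 13 - k < 14
    have hcBW : Multiset.card B + Multiset.card W = 14 := by
      have := complete_card hC; rwa [Multiset.card_add] at this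
    -- pick t ∈ H - B
    have hHB : 0 < Multiset.card (H - B) := by
      rw [Multiset.card_sub hBH]; omega
    obtain ⟨t, ht⟩ := Multiset.card_pos_iff_exists_mem.mp hHB
    have htH : t ∈ H := Multiset.mem_of_le (Multiset.sub_le_self H B) ht
    have htcnt : B.count t < H.count t := by
      have := Multiset.count_sub t H B
      have h1 : 0 < (H - B).count t := Multiset.count_pos.mpr ht
      omega
    have hKBt' : 0 < KB t' := lt_of_lt_of_le (Multiset.count_pos.mpr ht') (hW t')
    -- new hand
    have hBe : B ≤ H.erase t := by
      rw [Multiset.le_iff_count]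
      intro a
      rcases eq_or_ne a t with rfl | hne
      · rw [Multiset.count_erase_self]; omega
      · rw [Multiset.count_erase_of_ne hne]
        exact Multiset.le_iff_count.mp hBH a
    have hB' : t' ::ₘ B ≤ replaceTile H t t' := Multiset.cons_le_cons t' hBe
    have hcard' : Multiset.card (replaceTile H t t') = 14 := by
      unfold replaceTile
      rw [Multiset.card_cons, Multiset.card_erase_of_mem htH, hcard]
      rfl
    have hW' : ∀ s : Tile, (W.erase t').count s ≤ kbRemove KB t' s := by
      intro s
      unfold kbRemove
      rcases eq_or_ne s t' with rfl | hne
      · rw [Multiset.count_erase_self, Function.update_self]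
        have := hW s; omega
      · rw [Multiset.count_erase_of_ne hne, Function.update_of_ne hne]
        exact hW s
    have hcW' : Multiset.card (W.erase t') = k := by
      rw [Multiset.card_erase_of_mem ht', hcW]; rfl
    have hsum : (t' ::ₘ B) + W.erase t' = B + W := by
      rw [Multiset.cons_add, ← Multiset.add_cons, Multiset.cons_erase ht']
    have := ih (t' ::ₘ B) (W.erase t') (replaceTile H t t') (kbRemove KB t')
      hcard' hB' hW' hcW' (hsum ▸ hC)
    exact ReachKB.succ t t' htH hKBt' this

lemma ofReach {H : Multiset Tile} {KB : Tile → ℕ} {k : ℕ} (h : ReachKB H KB k) :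
    ∃ B W : Multiset Tile, B ≤ H ∧ (∀ s : Tile, W.count s ≤ KB s) ∧
      Multiset.card W ≤ k ∧ Complete (B + W) := by
  induction h with
  | zero hC => exact ⟨_, 0, le_refl _, fun s => by simp, by simp, by simpa⟩
  | @succ H KB l t t' htH hKBt' _ ih =>
    obtain ⟨B', W', hB', hW', hcW', hC'⟩ := ih
    by_cases hcase : B'.count t' ≤ (H.erase t).count t'
    · -- B' avoids the new tile copy
      refine ⟨B', W', ?_, ?_, by omega, hC'⟩
      · calc B' ≤ H.erase t := by
              rw [Multiset.le_iff_count]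
              intro a
              rcases eq_or_ne a t' with rfl | hne
              · exact hcase
              · have := Multiset.le_iff_count.mp hB' a
                unfold replaceTile at this
                rwa [Multiset.count_cons_of_ne hne] at this
            _ ≤ H := Multiset.erase_le t H
      · intro s
        have := hW' s
        unfold kbRemove at this
        rcases eq_or_ne s t' with rfl | hne
        · rw [Function.update_self] at this; omega
        · rwa [Function.update_of_ne hne] at this
    · -- B' uses t'
      have hcnt : t' ∈ B' := by
        have := Multiset.le_iff_count.mp hB' t'
        unfold replaceTile at this
        rw [Multiset.count_cons_self] at this
        exact Multiset.count_pos.mp (by omega)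
      refine ⟨B'.erase t', t' ::ₘ W', ?_, ?_, ?_, ?_⟩
      · calc B'.erase t' ≤ H.erase t := by
              rw [Multiset.le_iff_count]
              intro a
              have h2 := Multiset.le_iff_count.mp hB' a
              unfold replaceTile at h2
              rcases eq_or_ne a t' with h1 | hne
              · subst h1
                rw [Multiset.count_erase_self]
                rw [Multiset.count_cons_self] at h2
                omega
              · rw [Multiset.count_erase_of_ne hne]
                rwa [Multiset.count_cons_of_ne hne] at h2
            _ ≤ H := Multiset.erase_le t H
      · intro s
        have := hW' s
        unfold kbRemove at this
        rcases eq_or_ne s t' with rfl | hne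
        · rw [Function.update_self] at this
          rw [Multiset.count_cons_self]
          omega
        · rw [Function.update_of_ne hne] at this
          rw [Multiset.count_cons_of_ne hne]
          exact this
      · rw [Multiset.card_cons]; omega
      · have heq : B'.erase t' + (t' ::ₘ W') = B' + W' := by
          have hc1 : 0 < B'.count t' := Multiset.count_pos.mpr hcnt
          ext a
          by_cases h1 : a = t'
          · subst h1
            rw [Multiset.count_add, Multiset.count_add, Multiset.count_cons_self,
              Multiset.count_erase_self]
            omega
          · rw [Multiset.count_add, Multiset.count_add, Multiset.count_cons_of_ne h1,
              Multiset.count_erase_of_ne h1]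
        rwa [heq]

lemma split_one {s B W : Multiset Tile} (h : s ≤ B + W) :
    ∃ b w : Multiset Tile, b + w = s ∧ b ≤ B ∧ w ≤ W ∧
      (B + W) - s = (B - b) + (W - w) := by
  refine ⟨s ∩ B, s - s ∩ B, ?_, (Multiset.inter_le_right : s ∩ B ≤ B), ?_, ?_⟩
  · exact add_tsub_cancel_of_le (Multiset.inter_le_left : s ∩ B ≤ s)
  · rw [Multiset.le_iff_count]
    intro a
    have hs := Multiset.le_iff_count.mp h a
    rw [Multiset.count_add] at hs
    rw [Multiset.count_sub, Multiset.count_inter]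
    omega
  · ext a
    have hs := Multiset.le_iff_count.mp h a
    rw [Multiset.count_add] at hs
    simp only [Multiset.count_add, Multiset.count_sub, Multiset.count_inter]
    omega

lemma split_list : ∀ (L : List (Multiset Tile)) (B W : Multiset Tile),
    L.sum = B + W → ∃ L' : List (Multiset Tile × Multiset Tile),
      L'.map (fun p => p.1 + p.2) = L ∧ (L'.map Prod.fst).sum = B ∧
      (L'.map Prod.snd).sum = W := by
  intro L
  induction L with
  | nil =>
    intro B W h
    have hB : B = 0 := by
      have := congrArg Multiset.card h
      simp [Multiset.card_add] at this
      exact Multiset.card_eq_zero.mp (by omega)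
    have hW : W = 0 := by
      have := congrArg Multiset.card h
      simp [Multiset.card_add] at this
      exact Multiset.card_eq_zero.mp (by omega)
    exact ⟨[], by simp, by simp [hB], by simp [hW]⟩
  | cons s L ih =>
    intro B W h
    rw [List.sum_cons] at h
    have hsle : s ≤ B + W := h ▸ le_add_right (le_refl s) -- s ≤ s + L.sum
    obtain ⟨b, w, hbw, hbB, hwW, hrest⟩ := split_one hsle
    have hLsum : L.sum = (B - b) + (W - w) := by
      rw [← hrest, ← h]
      rw [add_tsub_cancel_left]
    obtain ⟨L', h1, h2, h3⟩ := ih (B - b) (W - w) hLsum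
    refine ⟨(b, w) :: L', by simp [h1, hbw], ?_, ?_⟩
    · simp [h2]
      exact add_tsub_cancel_of_le hbB
    · simp [h3]
      exact add_tsub_cancel_of_le hwW

lemma completion_reach {KB : Tile → ℕ} {H : Multiset Tile}
    {π : Multiset (Multiset Tile)} {P : Multiset (Multiset Tile × Multiset Tile)}
    (hQC : IsQCompletion KB H π P) (hπsum : π.sum ≤ H)
    (hcard : Multiset.card H = 14) :
    ReachKB H KB (Multiset.card (P.map Prod.snd).sum) := by
  obtain ⟨hP5, hπle, hsmall, hrem, hKBle, q, hqP, hqpair, hmelds⟩ := hQC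
  set B := (P.map Prod.fst).sum with hB
  set W := (P.map Prod.snd).sum with hW
  have hBH : B ≤ H := by
    have hsplit : P.map Prod.fst = π + (P.map Prod.fst - π) :=
      (add_tsub_cancel_of_le hπle).symm
    have : B = π.sum + (P.map Prod.fst - π).sum := by
      rw [hB, hsplit, Multiset.sum_add]
      congr 1
      · rw [← hsplit]
    calc B = π.sum + (P.map Prod.fst - π).sum := this
      _ ≤ π.sum + (H - π.sum) := add_le_add_right hrem _
      _ = H := add_tsub_cancel_of_le hπsum
  -- Complete (B + W)
  obtain ⟨l, hl⟩ : ∃ l : List (Multiset Tile × Multiset Tile), P.erase q = ↑l :=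
    ⟨(P.erase q).toList, (Multiset.coe_toList _).symm⟩
  have hlen : l.length = 4 := by
    have : Multiset.card (P.erase q) = 4 := by
      rw [Multiset.card_erase_of_mem hqP, hP5]; rfl
    rwa [hl, Multiset.coe_card] at this
  obtain ⟨r0, r1, r2, r3, hlst⟩ : ∃ a b c d, l = [a, b, c, d] := by
    match l, hlen with
    | [a, b, c, d], _ => exact ⟨a, b, c, d, rfl⟩
  subst hlst
  have hPeq : P = q ::ₘ (↑[r0, r1, r2, r3] : Multiset (Multiset Tile × Multiset Tile)) := by
    rw [← hl, Multiset.cons_erase hqP]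
  have hmeld : ∀ r ∈ [r0, r1, r2, r3], IsMeld (r.1 + r.2) := by
    intro r hr
    apply hmelds
    rw [hl]
    exact hr
  set ρ : Fin 5 → Multiset Tile :=
    ![r0.1 + r0.2, r1.1 + r1.2, r2.1 + r2.2, r3.1 + r3.2, q.1 + q.2] with hρ
  have hC : Complete (B + W) := by
    refine ⟨ρ, ?_, ?_, ?_⟩
    · rw [hB, hW, ← Multiset.sum_map_add, hPeq]
      simp [hρ, Fin.sum_univ_five]
      abel
    · intro i hi
      fin_cases i <;> simp [hρ] <;>
        [exact hmeld r0 (by simp); exact hmeld r1 (by simp);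
         exact hmeld r2 (by simp); exact hmeld r3 (by simp); skip]
      · exact absurd hi (by norm_num)
    · simpa [hρ] using hqpair
  have hcBW : Multiset.card B + Multiset.card W = 14 := by
    have := complete_card hC; rwa [Multiset.card_add] at this
  exact toReach _ B W H KB hcard hBH
    (fun s => by simpa using hKBle s) rfl hC

lemma card_of_pchow {s : Multiset Tile} (h : IsPchow s) : Multiset.card s = 2 := by
  obtain ⟨t, hc⟩ := h
  have := card_of_meld (Or.inr hc)
  rw [Multiset.card_cons] at this
  omega

lemma chow_count {s : Multiset Tile} (h : IsChow s) (t : Tile) : s.count t ≤ 1 := by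
  obtain ⟨c, i, j, k, hj, hk, rfl⟩ := h
  have hij : (c, i) ≠ (c, j) := by
    intro he
    have h2 := congrArg (fun p : Tile => (p.2 : ℕ)) he
    simp at h2; omega
  have hik : (c, i) ≠ (c, k) := by
    intro he
    have h2 := congrArg (fun p : Tile => (p.2 : ℕ)) he
    simp at h2; omega
  have hjk : (c, j) ≠ (c, k) := by
    intro he
    have h2 := congrArg (fun p : Tile => (p.2 : ℕ)) he
    simp at h2; omega
  show Multiset.count t ((c,i) ::ₘ (c,j) ::ₘ {(c,k)}) ≤ 1
  rw [Multiset.count_cons, Multiset.count_cons, Multiset.count_singleton]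
  split_ifs with h1 h2 h3 <;> simp_all <;> omega

lemma pair_not_pchow {s : Multiset Tile} (h : IsPair s) : ¬ IsPchow s := by
  obtain ⟨u, rfl⟩ := h
  rintro ⟨t, hc⟩
  have := chow_count hc u
  rw [Multiset.count_cons] at this
  simp [Multiset.count_cons] at this
  omega

lemma pair_of_le_pong {s b : Multiset Tile} (u : Tile) (hs : s = {u, u, u})
    (hb : b ≤ s) (hc : Multiset.card b = 2) : b = {u, u} := by
  subst hs
  have hmem : ∀ x ∈ b, x = u := by
    intro x hx
    have := Multiset.mem_of_le hb hx
    simpa using this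
  have := Multiset.eq_replicate_card.mpr hmem
  rw [hc] at this
  rw [this]
  rfl

/-- classification of a 2-card base inside a meld -/
lemma meld_base2 {s b w : Multiset Tile} (hm : IsMeld s) (h : b + w = s)
    (h2 : Multiset.card b = 2) :
    ∃ t : Tile, w = {t} ∧ IsMeld (t ::ₘ b) ∧
      ((IsPair b ∧ IsPong s) ∨ (IsPchow b ∧ IsChow s)) := by
  have hcs : Multiset.card s = 3 := card_of_meld hm
  have hcw : Multiset.card w = 1 := by
    have := congrArg Multiset.card h
    rw [Multiset.card_add] at this
    omega
  obtain ⟨t, rfl⟩ := Multiset.card_eq_one.mp hcw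
  have hts : t ::ₘ b = s := by
    rw [← h]
    rw [add_comm, Multiset.singleton_add]
  refine ⟨t, rfl, hts ▸ hm, ?_⟩
  rcases hm with hpong | hchow
  · left
    obtain ⟨u, hu⟩ := hpong
    refine ⟨?_, ⟨u, hu⟩⟩
    have := pair_of_le_pong u hu (h ▸ le_add_right (le_refl b)) h2
    exact ⟨u, this⟩
  · right
    exact ⟨⟨t, hts ▸ hchow⟩, hchow⟩

lemma meld_base3 {s b w : Multiset Tile} (hm : IsMeld s) (h : b + w = s)
    (h3 : Multiset.card b = 3) : b = s ∧ w = 0 := by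
  have hcs : Multiset.card s = 3 := card_of_meld hm
  have hcw : Multiset.card w = 0 := by
    have := congrArg Multiset.card h
    rw [Multiset.card_add] at this
    omega
  have hw0 : w = 0 := Multiset.card_eq_zero.mp hcw
  subst hw0
  rw [add_zero] at h
  exact ⟨h, rfl⟩

lemma le_chow_not_pair {s b : Multiset Tile} (hchow : IsChow s) (hb : b ≤ s) :
    ¬ IsPair b := by
  rintro ⟨u, rfl⟩
  have h1 := Multiset.le_iff_count.mp hb u
  have h2 := chow_count hchow u
  simp [Multiset.count_cons] at h1
  omega

lemma base_cases {s b w : Multiset Tile} (hm : IsMeld s) (h : b + w = s)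
    (h2 : 2 ≤ Multiset.card b) :
    (Multiset.card b = 3 ∧ b = s) ∨
    (Multiset.card b = 2 ∧ ∃ t : Tile, w = {t} ∧ IsMeld (t ::ₘ b) ∧
      ((IsPair b ∧ IsPong s) ∨ (IsPchow b ∧ IsChow s))) := by
  have hcs : Multiset.card s = 3 := card_of_meld hm
  have hcb : Multiset.card b ≤ 3 := by
    have := congrArg Multiset.card h
    rw [Multiset.card_add] at this
    omega
  interval_cases hcb' : Multiset.card b
  · exact Or.inr ⟨rfl, meld_base2 hm h hcb'⟩
  · exact Or.inl ⟨rfl, (meld_base3 hm h hcb').1⟩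

lemma reach_qdcmp {H : Multiset Tile} {KB : Tile → ℕ} {k : ℕ}
    (h : ReachKB H KB k) :
    ∃ π : Multiset (Multiset Tile), IsQDCMP KB H π ∧
      ∃ P : Multiset (Multiset Tile × Multiset Tile), IsQCompletion KB H π P ∧
        Multiset.card (P.map Prod.snd).sum ≤ k := by
  classical
  obtain ⟨B, W, hBH, hWKB, hcW, hC⟩ := ofReach h
  obtain ⟨ρ, hsum, hmeld, hpair⟩ := hC
  have hLsum : ([ρ 0, ρ 1, ρ 2, ρ 3, ρ 4] : List (Multiset Tile)).sum = B + W := by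
    rw [← hsum, Fin.sum_univ_five]
    simp [add_assoc]
  obtain ⟨L', hmap, hfst, hsnd⟩ := split_list _ _ _ hLsum
  have hlen : L'.length = 5 := by
    have := congrArg List.length hmap
    simpa using this
  obtain ⟨p0, p1, p2, p3, p4, rfl⟩ : ∃ a b c d e, L' = [a, b, c, d, e] := by
    match L', hlen with
    | [a, b, c, d, e], _ => exact ⟨a, b, c, d, e, rfl⟩
  simp only [List.map_cons, List.map_nil, List.cons.injEq, and_true] at hmap
  obtain ⟨he0, he1, he2, he3, he4⟩ := hmap
  simp only [List.map_cons, List.map_nil, List.sum_cons, List.sum_nil, add_zero] at hfst hsnd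
  -- the completion scheme
  set P : Multiset (Multiset Tile × Multiset Tile) := ↑[p0, p1, p2, p3, p4] with hPdef
  have hPfst : P.map Prod.fst = p0.1 ::ₘ p1.1 ::ₘ p2.1 ::ₘ p3.1 ::ₘ {p4.1} := rfl
  have hPsnd : P.map Prod.snd = p0.2 ::ₘ p1.2 ::ₘ p2.2 ::ₘ p3.2 ::ₘ {p4.2} := rfl
  have hBsum : (P.map Prod.fst).sum = B := by
    rw [hPfst]
    simpa [add_assoc] using hfst
  have hWsum : (P.map Prod.snd).sum = W := by
    rw [hPsnd]
    simpa [add_assoc] using hsnd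
  -- melds
  have hm0 : IsMeld (ρ 0) := hmeld 0 (by decide)
  have hm1 : IsMeld (ρ 1) := hmeld 1 (by decide)
  have hm2 : IsMeld (ρ 2) := hmeld 2 (by decide)
  have hm3 : IsMeld (ρ 3) := hmeld 3 (by decide)
  -- availability of borrowed tiles
  have hkb : ∀ w ∈ [p0.2, p1.2, p2.2, p3.2, p4.2], ∀ t : Tile, w = {t} → 0 < KB t := by
    intro w hw t ht
    have htW : t ∈ W := by
      rw [← hWsum, hPsnd]
      simp only [List.mem_cons, List.not_mem_nil, or_false] at hw
      rcases hw with rfl | rfl | rfl | rfl | rfl <;> simp [ht]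
    have h1 := hWKB t
    have h2 := Multiset.count_pos.mpr htW
    omega
  -- per-part classification, for the four meld parts
  have hclass : ∀ i : Fin 5, (i : ℕ) < 4 → ∀ p ∈ [p0, p1, p2, p3],
      p.1 + p.2 = ρ i → 2 ≤ Multiset.card p.1 →
      ((IsMeld p.1 ∨ IsPair p.1 ∨ IsPchow p.1) ∧
        (IsPchow p.1 → CompletablePmeld KB p.1) ∧
        ¬ (IsPair p.1 ∧ ¬ CompletablePmeld KB p.1)) := by
    intro i hi p hp hpe h2
    rcases base_cases (hmeld i hi) hpe h2 with ⟨h3, hps⟩ | ⟨hc2, t, hw, hmt, hcase⟩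
    · refine ⟨Or.inl (hps ▸ hmeld i hi), ?_, ?_⟩
      · intro hpc
        exact absurd (card_of_pchow hpc) (by omega)
      · rintro ⟨hpp, -⟩
        exact absurd (card_of_pair hpp) (by omega)
    · have hKBt : 0 < KB t := by
        apply hkb p.2 _ t hw
        simp only [List.mem_cons, List.not_mem_nil, or_false] at hp
        rcases hp with rfl | rfl | rfl | rfl <;> simp
      have hcomp : CompletablePmeld KB p.1 := ⟨t, hKBt, hmt⟩
      refine ⟨?_, fun _ => hcomp, fun hcon => hcon.2 hcomp⟩
      rcases hcase with ⟨hpp, _⟩ | ⟨hpc, _⟩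
      · exact Or.inr (Or.inl hpp)
      · exact Or.inr (Or.inr hpc)
  -- eye facts
  have hcρ4 : Multiset.card (ρ 4) = 2 := card_of_pair hpair
  have heye : 2 ≤ Multiset.card p4.1 → p4.1 = ρ 4 := by
    intro h2
    apply Multiset.eq_of_le_of_card_le (he4 ▸ le_add_right (le_refl p4.1))
    omega
  set pred : Multiset Tile → Prop := fun s => 2 ≤ Multiset.card s with hpred
  set π : Multiset (Multiset Tile) := (P.map Prod.fst).filter pred with hπ
  have hπle : π ≤ P.map Prod.fst := Multiset.filter_le _ _
  have hπsum : π.sum ≤ H := le_trans (le_trans (msum_le_msum hπle) (le_of_eq hBsum)) hBH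
  have hmemfst : ∀ s ∈ P.map Prod.fst,
      s = p0.1 ∨ s = p1.1 ∨ s = p2.1 ∨ s = p3.1 ∨ s = p4.1 := by
    intro s hs
    rw [hPfst] at hs
    simpa using hs
  have hQD : IsQDCMP KB H π := by
    refine ⟨?_, hπsum, ?_, ?_, ?_, ?_⟩
    · calc Multiset.card π ≤ Multiset.card (P.map Prod.fst) := Multiset.card_le_card hπle
        _ = 5 := by rw [hPfst]; rfl
    · intro s hs
      obtain ⟨hsP, hps⟩ := Multiset.mem_filter.mp hs
      rcases hmemfst s hsP with rfl | rfl | rfl | rfl | rfl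
      · exact (hclass 0 (by decide) p0 (by simp) he0 hps).1
      · exact (hclass 1 (by decide) p1 (by simp) he1 hps).1
      · exact (hclass 2 (by decide) p2 (by simp) he2 hps).1
      · exact (hclass 3 (by decide) p3 (by simp) he3 hps).1
      · exact Or.inr (Or.inl (by rw [heye hps]; exact hpair))
    · intro s hs hpc
      obtain ⟨hsP, hps⟩ := Multiset.mem_filter.mp hs
      rcases hmemfst s hsP with rfl | rfl | rfl | rfl | rfl
      · exact (hclass 0 (by decide) p0 (by simp) he0 hps).2.1 hpc
      · exact (hclass 1 (by decide) p1 (by simp) he1 hps).2.1 hpc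
      · exact (hclass 2 (by decide) p2 (by simp) he2 hps).2.1 hpc
      · exact (hclass 3 (by decide) p3 (by simp) he3 hps).2.1 hpc
      · exact absurd hpc (pair_not_pchow (by rw [heye hps]; exact hpair))
    · have hff : π.filter (fun s => IsPair s ∧ ¬ CompletablePmeld KB s) =
          (P.map Prod.fst).filter
            (fun s => pred s ∧ (IsPair s ∧ ¬ CompletablePmeld KB s)) := by
        rw [hπ, Multiset.filter_filter]
        exact Multiset.filter_congr (fun x _ => by tauto)
      rw [hff, hPfst]
      have hF0 : ¬(pred p0.1 ∧ (IsPair p0.1 ∧ ¬ CompletablePmeld KB p0.1)) :=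
        fun ⟨hp2, hq⟩ => (hclass 0 (by decide) p0 (by simp) he0 hp2).2.2 hq
      have hF1 : ¬(pred p1.1 ∧ (IsPair p1.1 ∧ ¬ CompletablePmeld KB p1.1)) :=
        fun ⟨hp2, hq⟩ => (hclass 1 (by decide) p1 (by simp) he1 hp2).2.2 hq
      have hF2 : ¬(pred p2.1 ∧ (IsPair p2.1 ∧ ¬ CompletablePmeld KB p2.1)) :=
        fun ⟨hp2, hq⟩ => (hclass 2 (by decide) p2 (by simp) he2 hp2).2.2 hq
      have hF3 : ¬(pred p3.1 ∧ (IsPair p3.1 ∧ ¬ CompletablePmeld KB p3.1)) :=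
        fun ⟨hp2, hq⟩ => (hclass 3 (by decide) p3 (by simp) he3 hp2).2.2 hq
      rw [Multiset.filter_cons, Multiset.filter_cons, Multiset.filter_cons,
        Multiset.filter_cons, Multiset.filter_singleton,
        if_neg hF0, if_neg hF1, if_neg hF2, if_neg hF3]
      split_ifs <;> simp
    · intro h5
      by_cases hp4 : pred p4.1
      · exact ⟨p4.1, Multiset.mem_filter.mpr ⟨by rw [hPfst]; simp, hp4⟩,
          by rw [heye hp4]; exact hpair⟩
      · exfalso
        rw [hπ, hPfst, Multiset.filter_cons, Multiset.filter_cons, Multiset.filter_cons,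
          Multiset.filter_cons, Multiset.filter_singleton, if_neg hp4] at h5
        split_ifs at h5 <;> simp [Multiset.card_add] at h5
  have hsub : P.map Prod.fst - π = (P.map Prod.fst).filter (fun s => ¬ pred s) :=
    Multiset.sub_filter_eq_filter_not pred (P.map Prod.fst)
  have hQC : IsQCompletion KB H π P := by
    refine ⟨?_, hπle, ?_, ?_, ?_, ⟨p4, ?_, ?_, ?_⟩⟩
    case _ => rw [hPdef]; simp
    · intro s hs
      rw [hsub] at hs
      have := (Multiset.mem_filter.mp hs).2
      rw [hpred] at this
      omega
    · rw [hsub]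
      unfold remainderOf
      have hadd : ((P.map Prod.fst).filter (fun s => ¬ pred s)).sum + π.sum = B := by
        rw [hπ, ← Multiset.sum_add, add_comm, Multiset.filter_add_not, hBsum]
      refine le_tsub_of_add_le_right ?_
      rw [hadd]
      exact hBH
    · intro t
      rw [hWsum]
      exact hWKB t
    · rw [hPdef]
      simp
    · rw [he4]
      exact hpair
    · intro r hr
      have hrP : r ∈ P := Multiset.mem_of_mem_erase hr
      have hrcase : r = p0 ∨ r = p1 ∨ r = p2 ∨ r = p3 ∨ r = p4 := by
        rw [hPdef] at hrP
        simpa using hrP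
      have hmain : ∀ r', r' = p0 ∨ r' = p1 ∨ r' = p2 ∨ r' = p3 →
          IsMeld (r'.1 + r'.2) := by
        rintro r' (rfl | rfl | rfl | rfl)
        · rw [he0]; exact hm0
        · rw [he1]; exact hm1
        · rw [he2]; exact hm2
        · rw [he3]; exact hm3
      rcases hrcase with hc | hc | hc | hc | rfl
      · exact hmain r (Or.inl hc)
      · exact hmain r (Or.inr (Or.inl hc))
      · exact hmain r (Or.inr (Or.inr (Or.inl hc)))
      · exact hmain r (Or.inr (Or.inr (Or.inr hc)))
      · -- r = p4 : it must coincide with one of the meld groups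
        have hcnt : 0 < Multiset.count r (P.erase r) := Multiset.count_pos.mpr hr
        rw [Multiset.count_erase_self] at hcnt
        have hdup : r = p0 ∨ r = p1 ∨ r = p2 ∨ r = p3 := by
          by_contra hcon
          push_neg at hcon
          obtain ⟨hn0, hn1, hn2, hn3⟩ := hcon
          have hPcons : P = p0 ::ₘ p1 ::ₘ p2 ::ₘ p3 ::ₘ {r} := rfl
          rw [hPcons] at hcnt
          simp [Multiset.count_cons, Multiset.count_singleton, hn0, hn1, hn2, hn3] at hcnt
        exact hmain r hdup
  exact ⟨π, hQD, P, hQC, by rw [hWsum]; exact hcW⟩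

/-- The knowledge-aware deficiency of a 14-tile `H` w.r.t. a compatible knowledge
base `KB` is the minimum of the costs of all quasi-decompositions of `H` under `KB`. -/
theorem dfncyKB_eq_min_qCost (H : Multiset Tile) (KB : Tile → ℕ)
    (hH : IsKTile 14 H) (hKB : IsKB KB) (hcomp : KBCompatible H KB) :
    dfncyKB H KB =
      sInf {c : ℕ∞ | ∃ π : Multiset (Multiset Tile), IsQDCMP KB H π ∧ qCost KB H π = c} := by
  apply le_antisymm
  · apply le_sInf
    rintro c ⟨π, hQD, rfl⟩
    apply le_sInf
    rintro c' ⟨P, hQC, rfl⟩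
    exact sInf_le ⟨_, completion_reach hQC hQD.2.1 hH.1, rfl⟩
  · apply le_sInf
    rintro c ⟨k, hre, rfl⟩
    obtain ⟨π, hQD, P, hQC, hle⟩ := reach_qdcmp hre
    calc sInf {c : ℕ∞ | ∃ π : Multiset (Multiset Tile), IsQDCMP KB H π ∧ qCost KB H π = c}
        ≤ qCost KB H π := sInf_le ⟨π, hQD, rfl⟩
      _ ≤ (Multiset.card (P.map Prod.snd).sum : ℕ∞) := sInf_le ⟨P, hQC, rfl⟩
      _ ≤ (k : ℕ∞) := Nat.cast_le.mpr hle
end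

section
/- Let π be a quasi-decomposition of H under KB with type (m, n, p, e, re, rm, em), and suppose m + n − e ≤ 2. Set mcost = 2·rm + 3·(1 − rm) and ecost = re + 2·(1 − re). Then: (a) if e = 1, the cost of π is at least (n − 1) + mcost·(4 − m − n + 1) ≥ 4; (b) if p = 0, the cost of π is at least n + mcost·(4 − m − n) + ecost + em ≥ 5; (c) if p > e = 0, the cost of π is at least min(f1, f2) ≥ 6, where f1 = n + mcost·(4 − n − m) + ecost and f2 = (n − 1) + mcost·(4 − m − n + 1). -/
attribute [local instance] Classical.propDecidable

namespace QW

lemma chow_count {s : Multiset Tile} (h : IsChow s) (x : Tile) : s.count x ≤ 1 := by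
  obtain ⟨c, i, j, k, hj, hk, rfl⟩ := h
  have h1 : (c, i) ≠ (c, j) := by
    intro h; have := congrArg (fun x : Tile => (x.2 : ℕ)) h; simp at this; omega
  have h2 : (c, i) ≠ (c, k) := by
    intro h; have := congrArg (fun x : Tile => (x.2 : ℕ)) h; simp at this; omega
  have h3 : (c, j) ≠ (c, k) := by
    intro h; have := congrArg (fun x : Tile => (x.2 : ℕ)) h; simp at this; omega
  simp only [Multiset.insert_eq_cons, Multiset.count_cons, Multiset.count_singleton]
  split_ifs <;> simp_all

lemma pair_card {s : Multiset Tile} (h : IsPair s) : Multiset.card s = 2 := by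
  obtain ⟨t, rfl⟩ := h; rfl

lemma meld_card {s : Multiset Tile} (h : IsMeld s) : Multiset.card s = 3 := by
  rcases h with ⟨t, rfl⟩ | ⟨c, i, j, k, _, _, rfl⟩ <;> rfl

lemma pchow_card {s : Multiset Tile} (h : IsPchow s) : Multiset.card s = 2 := by
  obtain ⟨t, hc⟩ := h
  have := meld_card (Or.inr hc)
  simpa using this

lemma pchow_not_pair {s : Multiset Tile} (h : IsPchow s) : ¬ IsPair s := by
  rintro ⟨u, rfl⟩
  obtain ⟨t, hc⟩ := h
  have := chow_count hc u
  simp [Multiset.count_cons, Multiset.insert_eq_cons, Multiset.count_singleton] at this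
  split_ifs at this <;> omega

lemma meld_not_pmeld {s : Multiset Tile} (h : IsMeld s) : ¬ IsPmeld s := by
  intro h'
  have h3 := meld_card h
  rcases h' with h' | h'
  · rw [pchow_card h'] at h3; omega
  · rw [pair_card h'] at h3; omega

lemma pmeld_card {s : Multiset Tile} (h : IsPmeld s) : Multiset.card s = 2 := by
  rcases h with h | h
  · exact pchow_card h
  · exact pair_card h

lemma exists_le_map {α β : Type*} (f : α → β) {s : Multiset β} {t : Multiset α}
    (h : s ≤ t.map f) : ∃ u, u ≤ t ∧ u.map f = s := by
  induction s using Multiset.induction_on generalizing t with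
  | empty => exact ⟨0, zero_le, rfl⟩
  | cons a s ih =>
    have ha : a ∈ t.map f := Multiset.mem_of_le h (Multiset.mem_cons_self a s)
    obtain ⟨b, hb, rfl⟩ := Multiset.mem_map.mp ha
    have ht : t = b ::ₘ t.erase b := (Multiset.cons_erase hb).symm
    rw [ht, Multiset.map_cons] at h
    have h' : s ≤ (t.erase b).map f := (Multiset.cons_le_cons_iff _).mp h
    obtain ⟨u, hu, hmap⟩ := ih h'
    exact ⟨b ::ₘ u, by rw [ht]; exact Multiset.cons_le_cons _ hu,
      by rw [Multiset.map_cons, hmap]⟩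

lemma sum_map_le {α : Type*} {s : Multiset α} {f g : α → ℕ} (h : ∀ x ∈ s, f x ≤ g x) :
    (s.map f).sum ≤ (s.map g).sum := by
  induction s using Multiset.induction_on with
  | empty => simp
  | cons a s ih =>
    simp only [Multiset.map_cons, Multiset.sum_cons]
    exact Nat.add_le_add (h a (Multiset.mem_cons_self a s))
      (ih fun x hx => h x (Multiset.mem_cons_of_mem hx))

lemma sum_indicator {α : Type*} (pr : α → Prop) (s : Multiset α) :
    (s.map fun x => if pr x then 1 else 0).sum = s.countP pr := by
  induction s using Multiset.induction_on with
  | empty => simp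
  | cons a s ih =>
    simp only [Multiset.map_cons, Multiset.sum_cons, Multiset.countP_cons, ih]
    split_ifs <;> omega

lemma sum_const {α : Type*} (c : ℕ) (s : Multiset α) :
    (s.map fun _ => c).sum = Multiset.card s * c := by
  induction s using Multiset.induction_on with
  | empty => simp
  | cons a s ih => simp [ih]; ring

lemma card_sum' (s : Multiset (Multiset Tile)) :
    Multiset.card s.sum = (s.map Multiset.card).sum := by
  induction s using Multiset.induction_on with
  | empty => simp
  | cons a s ih => simp [ih]

end QW

namespace QW

lemma pmeld_of_mem {KB : Tile → ℕ} {H : Multiset Tile} {π : Multiset (Multiset Tile)}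
    (hpi : IsQDCMP KB H π) {s : Multiset Tile} (hs : s ∈ π) (h : ¬ IsMeld s) :
    IsPmeld s := by
  rcases hpi.2.2.1 s hs with h' | h' | h'
  · exact absurd h' h
  · exact Or.inr h'
  · exact Or.inl h'

lemma key (H : Multiset Tile) (KB : Tile → ℕ)
    (π : Multiset (Multiset Tile)) (hpi : IsQDCMP KB H π)
    (m n p e re rm em : ℕ)
    (hm : m = attrM π) (hn : n = attrN π) (hp : p = attrP π) (he : e = attrE KB π)
    (hre : re = attrRe KB H π) (hrm : rm = attrRm KB H π) (hem : em = attrEm KB H π)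
    (hmn : m + n ≤ 2 + e)
    (mcost ecost : ℕ) (hmc : mcost = 2 * rm + 3 * (1 - rm))
    (hec : ecost = re + 2 * (1 - re))
    (P : Multiset (Multiset Tile × Multiset Tile)) (hP : IsQCompletion KB H π P) :
    (e = 1 → n - 1 + mcost * (4 - m - n + 1) ≤ Multiset.card (P.map Prod.snd).sum) ∧
    (p = 0 → n + mcost * (4 - m - n) + ecost + em ≤ Multiset.card (P.map Prod.snd).sum) ∧
    (0 < p ∧ e = 0 →
      min (n + mcost * (4 - n - m) + ecost) (n - 1 + mcost * (4 - m - n + 1)) ≤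
        Multiset.card (P.map Prod.snd).sum) := by
  obtain ⟨hcard5, hle, hsmall, hrem, hKBb, q, hqP, hqpair, hmelds⟩ := hP
  obtain ⟨P₁, hP₁le, hP₁map⟩ := QW.exists_le_map Prod.fst hle
  obtain ⟨P₂, rfl⟩ := Multiset.le_iff_exists_add.mp hP₁le
  have hrm1 : rm ≤ 1 := by rw [hrm]; unfold attrRm; split <;> omega
  have hre1 : re ≤ 1 := by rw [hre]; unfold attrRe; split <;> omega
  have hcardπ : Multiset.card π = m + n := by
    have hfe : Multiset.filter IsPmeld π = Multiset.filter (fun s => ¬ IsMeld s) π := by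
      apply Multiset.filter_congr
      intro s hs
      exact ⟨fun h1 h2 => QW.meld_not_pmeld h2 h1, pmeld_of_mem hpi hs⟩
    rw [hm, hn, attrM, attrN, hfe, ← Multiset.card_add, Multiset.filter_add_not]
  have hfst2 : (P₁ + P₂).map Prod.fst - π = P₂.map Prod.fst := by
    rw [Multiset.map_add, ← hP₁map, add_tsub_cancel_left]
  have hcardP₁ : Multiset.card P₁ = m + n := by
    rw [← hcardπ, ← hP₁map, Multiset.card_map]
  have hcards : Multiset.card P₁ + Multiset.card P₂ = 5 := by
    rw [← Multiset.card_add]; exact hcard5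
  have hKBle : ∀ r ∈ P₁ + P₂, ∀ t : Tile, Multiset.count t r.2 ≤ KB t := by
    intro r hr t
    have h1 : r.2 ≤ ((P₁ + P₂).map Prod.snd).sum :=
      Multiset.le_sum_of_mem (Multiset.mem_map_of_mem _ hr)
    exact le_trans (Multiset.count_le_of_le t h1) (hKBb t)
  have hseedsmall : ∀ r ∈ P₂, Multiset.card r.1 ≤ 1 := by
    intro r hr
    exact hsmall _ (by rw [hfst2]; exact Multiset.mem_map_of_mem _ hr)
  have hseedrem : ∀ r ∈ P₂, r.1 ≤ remainderOf H π := by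
    intro r hr
    calc r.1 ≤ (P₂.map Prod.fst).sum :=
          Multiset.le_sum_of_mem (Multiset.mem_map_of_mem _ hr)
      _ ≤ remainderOf H π := by rw [← hfst2]; exact hrem
  have hseedcost : ∀ r ∈ P₂, IsMeld (r.1 + r.2) → mcost ≤ Multiset.card r.2 := by
    intro r hr hmeld
    have h3 : Multiset.card r.1 + Multiset.card r.2 = 3 := by
      rw [← Multiset.card_add]; exact QW.meld_card hmeld
    have h1 := hseedsmall r hr
    rcases Nat.lt_or_ge (Multiset.card r.1) 1 with h | h
    · omega
    · have hc1 : Multiset.card r.1 = 1 := le_antisymm h1 h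
      obtain ⟨t, ht⟩ := Multiset.card_eq_one.mp hc1
      have htrem : t ∈ remainderOf H π := by
        have h4 := hseedrem r hr; rw [ht] at h4
        exact Multiset.mem_of_le h4 (Multiset.mem_singleton_self t)
      have hcsm : CanStartMeld KB t := by
        refine ⟨r.2, by omega, fun s => hKBle r (Multiset.mem_add.mpr (Or.inr hr)) s, ?_⟩
        have h5 : t ::ₘ r.2 = r.1 + r.2 := by rw [ht, Multiset.singleton_add]
        rw [h5]; exact hmeld
      have hrm' : rm = 1 := by
        rw [hrm]; unfold attrRm; rw [if_pos ⟨t, htrem, hcsm⟩]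
      omega
  have hpair2 : Multiset.card q.1 + Multiset.card q.2 = 2 := by
    rw [← Multiset.card_add]; exact QW.pair_card hqpair
  have hnval : n = Multiset.countP IsPmeld π := by
    rw [hn, attrN, Multiset.countP_eq_card_filter]
  rcases Multiset.mem_add.mp hqP with hq | hq
  · -- Branch A : the eye group's base is a part of π
    have hP₁eq : q ::ₘ P₁.erase q = P₁ := Multiset.cons_erase hq
    set P₁' := P₁.erase q with hP₁'def
    have hπeq : π = q.1 ::ₘ P₁'.map Prod.fst := by
      rw [← hP₁map, ← hP₁eq, Multiset.map_cons]
    have hPeq : P₁ + P₂ = q ::ₘ (P₁' + P₂) := by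
      rw [← hP₁eq, Multiset.cons_add]
    have herase : (P₁ + P₂).erase q = P₁' + P₂ := by
      rw [hPeq, Multiset.erase_cons_head]
    have hmelds' : ∀ r ∈ P₁' + P₂, IsMeld (r.1 + r.2) := by
      intro r hr; exact hmelds r (by rw [herase]; exact hr)
    have hq1π : q.1 ∈ π := by rw [hπeq]; exact Multiset.mem_cons_self _ _
    have hq1pair : IsPair q.1 := by
      rcases hpi.2.2.1 _ hq1π with h | h | h
      · exfalso; have := QW.meld_card h; omega
      · exact h
      · exfalso
        have h2 := QW.pchow_card h
        have hz : q.2 = 0 := Multiset.card_eq_zero.mp (by omega)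
        apply QW.pchow_not_pair h
        have : q.1 + q.2 = q.1 := by rw [hz, add_zero]
        rw [← this]; exact hqpair
    have hB : Multiset.card ((P₁ + P₂).map Prod.snd).sum =
        Multiset.card q.2 + ((P₁'.map fun r => Multiset.card r.2).sum
          + (P₂.map fun r => Multiset.card r.2).sum) := by
      rw [hPeq, QW.card_sum', Multiset.map_map, Multiset.map_cons, Multiset.sum_cons,
        Multiset.map_add, Multiset.sum_add]
      rfl
    have hcount : Multiset.countP IsPmeld (P₁'.map Prod.fst) + 1 = n := by
      have hpm : IsPmeld q.1 := Or.inr hq1pair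
      rw [hnval, hπeq, Multiset.countP_cons]
      simp [hpm]
    have hS1 : n - 1 ≤ (P₁'.map fun r => Multiset.card r.2).sum := by
      have hpt : ∀ r ∈ P₁', (if IsPmeld r.1 then 1 else 0) ≤ Multiset.card r.2 := by
        intro r hr
        have h3 : Multiset.card r.1 + Multiset.card r.2 = 3 := by
          rw [← Multiset.card_add]
          exact QW.meld_card (hmelds' r (Multiset.mem_add.mpr (Or.inl hr)))
        split_ifs with h
        · have := QW.pmeld_card h; omega
        · omega
      have h6 : (P₁'.map fun r => if IsPmeld r.1 then 1 else 0).sum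
          ≤ (P₁'.map fun r => Multiset.card r.2).sum := QW.sum_map_le hpt
      have h7 : (P₁'.map fun r => if IsPmeld r.1 then 1 else 0).sum
          = Multiset.countP IsPmeld (P₁'.map Prod.fst) := by
        rw [← QW.sum_indicator IsPmeld (P₁'.map Prod.fst), Multiset.map_map]
        rfl
      omega
    have hS2 : mcost * Multiset.card P₂ ≤ (P₂.map fun r => Multiset.card r.2).sum := by
      calc mcost * Multiset.card P₂ = Multiset.card P₂ * mcost := Nat.mul_comm _ _
        _ = (P₂.map fun _ => mcost).sum := (QW.sum_const mcost P₂).symm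
        _ ≤ _ := QW.sum_map_le fun r hr =>
            hseedcost r hr (hmelds' r (Multiset.mem_add.mpr (Or.inr hr)))
    refine ⟨?_, ?_, ?_⟩
    · intro he1
      have h45 : 4 - m - n + 1 = Multiset.card P₂ := by omega
      rw [hB, h45]; omega
    · intro hp0
      exfalso
      have hmem : q.1 ∈ Multiset.filter IsPair π := Multiset.mem_filter.mpr ⟨hq1π, hq1pair⟩
      have hppos : 0 < p := by
        rw [hp, attrP]
        exact Multiset.card_pos.mpr fun h0 => by rw [h0] at hmem; exact absurd hmem (Multiset.notMem_zero _)
      omega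
    · rintro ⟨hppos, he0⟩
      refine le_trans (min_le_right _ _) ?_
      have h45 : 4 - m - n + 1 = Multiset.card P₂ := by omega
      rw [hB, h45]; omega
  · -- Branch B : the eye group's base is a seed
    have hP₂eq : q ::ₘ P₂.erase q = P₂ := Multiset.cons_erase hq
    set P₂' := P₂.erase q with hP₂'def
    have hPeq : P₁ + P₂ = q ::ₘ (P₁ + P₂') := by
      rw [← hP₂eq, ← Multiset.singleton_add, ← Multiset.singleton_add]
      rw [← add_assoc, add_comm P₁ {q}, add_assoc]
    have herase : (P₁ + P₂).erase q = P₁ + P₂' := by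
      rw [hPeq, Multiset.erase_cons_head]
    have hmelds' : ∀ r ∈ P₁ + P₂', IsMeld (r.1 + r.2) := by
      intro r hr; exact hmelds r (by rw [herase]; exact hr)
    have hcP₂ : Multiset.card P₂ = Multiset.card P₂' + 1 := by
      rw [← hP₂eq, Multiset.card_cons]
    have hB : Multiset.card ((P₁ + P₂).map Prod.snd).sum =
        Multiset.card q.2 + ((P₁.map fun r => Multiset.card r.2).sum
          + (P₂'.map fun r => Multiset.card r.2).sum) := by
      rw [hPeq, QW.card_sum', Multiset.map_map, Multiset.map_cons, Multiset.sum_cons,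
        Multiset.map_add, Multiset.sum_add]
      rfl
    have hS1 : n ≤ (P₁.map fun r => Multiset.card r.2).sum := by
      have hpt : ∀ r ∈ P₁, (if IsPmeld r.1 then 1 else 0) ≤ Multiset.card r.2 := by
        intro r hr
        have h3 : Multiset.card r.1 + Multiset.card r.2 = 3 := by
          rw [← Multiset.card_add]
          exact QW.meld_card (hmelds' r (Multiset.mem_add.mpr (Or.inl hr)))
        split_ifs with h
        · have := QW.pmeld_card h; omega
        · omega
      have h6 : (P₁.map fun r => if IsPmeld r.1 then 1 else 0).sum
          ≤ (P₁.map fun r => Multiset.card r.2).sum := QW.sum_map_le hpt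
      have h7 : (P₁.map fun r => if IsPmeld r.1 then 1 else 0).sum
          = Multiset.countP IsPmeld (P₁.map Prod.fst) := by
        rw [← QW.sum_indicator IsPmeld (P₁.map Prod.fst), Multiset.map_map]
        rfl
      rw [hP₁map] at h7
      omega
    have hS2 : mcost * Multiset.card P₂' ≤ (P₂'.map fun r => Multiset.card r.2).sum := by
      calc mcost * Multiset.card P₂' = Multiset.card P₂' * mcost := Nat.mul_comm _ _
        _ = (P₂'.map fun _ => mcost).sum := (QW.sum_const mcost P₂').symm
        _ ≤ _ := QW.sum_map_le fun r hr =>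
            hseedcost r (Multiset.mem_of_le (Multiset.erase_le _ _) hr)
              (hmelds' r (Multiset.mem_add.mpr (Or.inr hr)))
    have hcq : ecost ≤ Multiset.card q.2 := by
      have hq1small : Multiset.card q.1 ≤ 1 := hseedsmall q hq
      rcases le_or_gt 2 (Multiset.card q.2) with h | h
      · omega
      · have hq11 : Multiset.card q.1 = 1 := by omega
        have hq21 : Multiset.card q.2 = 1 := by omega
        obtain ⟨t, ht⟩ := Multiset.card_eq_one.mp hq11
        obtain ⟨t', ht'⟩ := Multiset.card_eq_one.mp hq21
        have htt : t' = t := by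
          obtain ⟨u, hu⟩ := hqpair
          rw [ht, ht', Multiset.singleton_add] at hu
          have h1 : t ∈ ({u, u} : Multiset Tile) := by
            rw [← hu]; exact Multiset.mem_cons_self _ _
          have h2 : t' ∈ ({u, u} : Multiset Tile) := by
            rw [← hu]; exact Multiset.mem_cons_of_mem (Multiset.mem_singleton_self _)
          simp only [Multiset.insert_eq_cons, Multiset.mem_cons, Multiset.mem_singleton] at h1 h2
          rcases h1 with h1 | h1 <;> rcases h2 with h2 | h2 <;> rw [h1, h2]
        have hKBt : 0 < KB t := by
          have h8 := hKBle q (Multiset.mem_add.mpr (Or.inr hq)) t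
          rw [ht', htt, Multiset.count_singleton, if_pos rfl] at h8
          omega
        have htrem : t ∈ remainderOf H π := by
          have h9 := hseedrem q hq; rw [ht] at h9
          exact Multiset.mem_of_le h9 (Multiset.mem_singleton_self t)
        have hre' : re = 1 := by
          rw [hre]; unfold attrRe; rw [if_pos ⟨t, htrem, hKBt⟩]
        omega
    refine ⟨?_, ?_, ?_⟩
    · intro he1
      exfalso
      have hepos : 0 < Multiset.card
          (π.filter fun s => IsPair s ∧ ¬ CompletablePmeld KB s) := by
        rw [he, attrE] at he1; omega
      obtain ⟨s, hs⟩ := Multiset.card_pos_iff_exists_mem.mp hepos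
      obtain ⟨hsπ, hspair, hsnc⟩ := Multiset.mem_filter.mp hs
      rw [← hP₁map] at hsπ
      obtain ⟨r, hrP₁, hr1⟩ := Multiset.mem_map.mp hsπ
      have hmr : IsMeld (r.1 + r.2) := hmelds' r (Multiset.mem_add.mpr (Or.inl hrP₁))
      have h3 : Multiset.card r.1 + Multiset.card r.2 = 3 := by
        rw [← Multiset.card_add]; exact QW.meld_card hmr
      have hr12 : Multiset.card r.1 = 2 := by rw [hr1]; exact QW.pair_card hspair
      obtain ⟨t, ht2⟩ := Multiset.card_eq_one.mp (by omega : Multiset.card r.2 = 1)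
      apply hsnc
      refine ⟨t, ?_, ?_⟩
      · have h8 := hKBle r (Multiset.mem_add.mpr (Or.inl hrP₁)) t
        rw [ht2, Multiset.count_singleton, if_pos rfl] at h8
        omega
      · have h5 : t ::ₘ s = r.1 + r.2 := by
          rw [← hr1, ht2, ← Multiset.singleton_add, add_comm]
        rw [h5]; exact hmr
    · intro hp0
      have hep : e ≤ p := by
        rw [he, hp, attrE, attrP]
        exact Multiset.card_le_card
          (Multiset.monotone_filter_right _ fun s h => h.1)
      have he0 : e = 0 := by omega
      have hk2 : 4 - m - n = Multiset.card P₂' := by omega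
      have hem2 := hem
      unfold attrEm at hem2
      split_ifs at hem2 with hcond
      · obtain ⟨hE0, hRe1, hRm1, hnoconf⟩ := hcond
        have hre' : re = 1 := by rw [hre, hRe1]
        have hrm' : rm = 1 := by rw [hrm, hRm1]
        have hmc2 : mcost = 2 := by omega
        have key2 : 2 ≤ Multiset.card q.2 ∨ ∀ r ∈ P₂', 3 ≤ Multiset.card r.2 := by
          by_contra hcon
          push_neg at hcon
          obtain ⟨hq2, r, hrP₂', hr3⟩ := hcon
          apply hnoconf
          have hq1small : Multiset.card q.1 ≤ 1 := hseedsmall q hq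
          have hq11 : Multiset.card q.1 = 1 := by omega
          have hq21 : Multiset.card q.2 = 1 := by omega
          have hrP₂ : r ∈ P₂ := Multiset.mem_of_le (Multiset.erase_le _ _) hrP₂'
          have hmr : IsMeld (r.1 + r.2) := hmelds' r (Multiset.mem_add.mpr (Or.inr hrP₂'))
          have h3 : Multiset.card r.1 + Multiset.card r.2 = 3 := by
            rw [← Multiset.card_add]; exact QW.meld_card hmr
          have hr11 : Multiset.card r.1 = 1 := by
            have := hseedsmall r hrP₂; omega
          have hr22 : Multiset.card r.2 = 2 := by omega
          obtain ⟨t₁, ht₁⟩ := Multiset.card_eq_one.mp hq11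
          obtain ⟨t₂, ht₂⟩ := Multiset.card_eq_one.mp hr11
          refine ⟨t₁, t₂, q.2, r.2, ?_, hq21, hr22, ?_, ?_, ?_⟩
          · have h10 : q.1 + r.1 ≤ (P₂.map Prod.fst).sum := by
              rw [← hP₂eq, Multiset.map_cons, Multiset.sum_cons]
              exact add_le_add_right
                (Multiset.le_sum_of_mem (Multiset.mem_map_of_mem _ hrP₂')) _
            have h11 : t₁ ::ₘ ({t₂} : Multiset Tile) = q.1 + r.1 := by
              rw [ht₁, ht₂, Multiset.singleton_add]
            rw [h11]
            exact le_trans h10 (by rw [← hfst2]; exact hrem)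
          · intro s
            have h12 : q.2 + r.2 ≤ ((P₁ + P₂).map Prod.snd).sum := by
              rw [hPeq, Multiset.map_cons, Multiset.sum_cons]
              exact add_le_add_right
                (Multiset.le_sum_of_mem (Multiset.mem_map_of_mem _
                  (Multiset.mem_add.mpr (Or.inr hrP₂')))) _
            exact le_trans (Multiset.count_le_of_le s h12) (hKBb s)
          · have h13 : t₁ ::ₘ q.2 = q.1 + q.2 := by rw [ht₁, Multiset.singleton_add]
            rw [h13]; exact hqpair
          · have h14 : t₂ ::ₘ r.2 = r.1 + r.2 := by rw [ht₂, Multiset.singleton_add]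
            rw [h14]; exact hmr
        rcases key2 with h | h
        · rw [hmc2] at hS2
          rw [hB, hk2, hmc2]; omega
        · have h15 : 3 * Multiset.card P₂' ≤ (P₂'.map fun r => Multiset.card r.2).sum := by
            calc 3 * Multiset.card P₂' = Multiset.card P₂' * 3 := Nat.mul_comm _ _
              _ = (P₂'.map fun _ => 3).sum := (QW.sum_const 3 P₂').symm
              _ ≤ _ := QW.sum_map_le h
          rw [hmc2] at hS2
          rw [hB, hk2, hmc2]; omega
      · rw [hB, hk2]; omega
    · rintro ⟨hppos, he0⟩
      refine le_trans (min_le_left _ _) ?_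
      have hk2 : 4 - n - m = Multiset.card P₂' := by omega
      rw [hB, hk2]; omega

end QW

/-- Lower bounds on the cost of a quasi-decomposition when `m + n - e ≤ 2`. -/
theorem qdcmp_cost_mne_le_two (H : Multiset Tile) (KB : Tile → ℕ)
    (π : Multiset (Multiset Tile))
    (hH : IsKTile 14 H) (hKB : IsKB KB) (hcomp : KBCompatible H KB)
    (hpi : IsQDCMP KB H π)
    (m n p e re rm em ke km : ℕ)
    (hm : m = attrM π) (hn : n = attrN π) (hp : p = attrP π) (he : e = attrE KB π)
    (hre : re = attrRe KB H π) (hrm : rm = attrRm KB H π) (hem : em = attrEm KB H π)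
    (hke : ke = kbKe KB) (hkm : km = kbKm KB)
    (hmn : m + n ≤ 2 + e)
    (mcost ecost f1 f2 : ℕ)
    (hmc : mcost = 2 * rm + 3 * (1 - rm)) (hec : ecost = re + 2 * (1 - re))
    (hf1 : f1 = n + mcost * (4 - n - m) + ecost)
    (hf2 : f2 = n - 1 + mcost * (4 - m - n + 1)) :
    (e = 1 →
      ((n - 1 + mcost * (4 - m - n + 1) : ℕ) : ℕ∞) ≤ qCost KB H π ∧
      4 ≤ n - 1 + mcost * (4 - m - n + 1)) ∧
    (p = 0 →
      ((n + mcost * (4 - m - n) + ecost + em : ℕ) : ℕ∞) ≤ qCost KB H π ∧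
      5 ≤ n + mcost * (4 - m - n) + ecost + em) ∧
    (0 < p ∧ e = 0 →
      ((min f1 f2 : ℕ) : ℕ∞) ≤ qCost KB H π ∧ 6 ≤ min f1 f2) := by
  have key := QW.key H KB π hpi m n p e re rm em hm hn hp he hre hrm hem hmn
    mcost ecost hmc hec
  have hrm1 : rm ≤ 1 := by rw [hrm]; unfold attrRm; split <;> omega
  have hre1 : re ≤ 1 := by rw [hre]; unfold attrRe; split <;> omega
  have hep : e ≤ p := by
    rw [he, hp, attrE, attrP]
    exact Multiset.card_le_card (Multiset.monotone_filter_right _ fun s h => h.1)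
  have hpn : p ≤ n := by
    rw [hp, hn, attrP, attrN]
    exact Multiset.card_le_card (Multiset.monotone_filter_right _ fun s h => Or.inr h)
  have hrm01 : rm = 0 ∨ rm = 1 := by omega
  have hqb : ∀ k : ℕ, (∀ P, IsQCompletion KB H π P →
      k ≤ Multiset.card (P.map Prod.snd).sum) → (k : ℕ∞) ≤ qCost KB H π := by
    intro k hk
    unfold qCost
    apply le_sInf
    rintro b ⟨P, hP, rfl⟩
    exact_mod_cast hk P hP
  refine ⟨fun he1 => ⟨?_, ?_⟩, fun hp0 => ⟨?_, ?_⟩, fun hpe => ⟨?_, ?_⟩⟩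
  · exact hqb _ fun P hP => (key P hP).1 he1
  · rcases hrm01 with h | h
    · rw [show mcost = 3 from by omega]; omega
    · rw [show mcost = 2 from by omega]; omega
  · exact hqb _ fun P hP => (key P hP).2.1 hp0
  · rcases hrm01 with h | h
    · rw [show mcost = 3 from by omega]; omega
    · rw [show mcost = 2 from by omega]; omega
  · rw [hf1, hf2]; exact hqb _ fun P hP => (key P hP).2.2 hpe
  · obtain ⟨hpp, he0⟩ := hpe
    rcases hrm01 with h | h
    · rw [hf1, hf2, show mcost = 3 from by omega]; omega
    · rw [hf1, hf2, show mcost = 2 from by omega]; omega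
end

section
/- Let H be a hand, KB a knowledge base, and B the set of KB-blocks of H. For any quasi-decomposition π of H under KB and any b ∈ B, the restriction π↓b of π to b (the sub-collection of all melds and pmelds of π contained in b) is a quasi-decomposition of b under KB; moreover, π is exactly the amalgamation (union) of all the restrictions π↓b over b ∈ B. -/
attribute [local instance] Classical.propDecidable

/-! ### Auxiliary lemmas for `qdcmp_restrict_amalgamate` -/

/-- The one-step relation used in the connectivity condition of `IsKBBlock`. -/
def KBStep (KB : Tile → ℕ) (H : Multiset Tile) (x y : Tile) : Prop :=
  y ∈ H ∧ KBConn KB H x y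

lemma kbconn_symm {KB : Tile → ℕ} {H : Multiset Tile} {t t' : Tile}
    (h : KBConn KB H t t') : KBConn KB H t' t := by
  rcases h with rfl | ⟨u, hu, hc⟩
  · exact Or.inl rfl
  · refine Or.inr ⟨u, hu, ?_⟩
    have e : ({t, t', u} : Multiset Tile) = ({t', t, u} : Multiset Tile) :=
      Multiset.cons_swap t t' {u}
    rwa [e] at hc

lemma kbstep_endpoint {KB : Tile → ℕ} {H : Multiset Tile} {t p : Tile}
    (h : Relation.ReflTransGen (KBStep KB H) t p) : p = t ∨ p ∈ H := by
  induction h with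
  | refl => exact Or.inl rfl
  | tail _ h2 _ => exact Or.inr h2.1

lemma kbstep_reverse {KB : Tile → ℕ} {H : Multiset Tile} {t p : Tile} (ht : t ∈ H)
    (h : Relation.ReflTransGen (KBStep KB H) t p) :
    Relation.ReflTransGen (KBStep KB H) p t := by
  induction h with
  | refl => exact .refl
  | @tail b c h1 h2 ih =>
      have hbH : b ∈ H := by
        rcases kbstep_endpoint h1 with rfl | hb
        · exact ht
        · exact hb
      exact Relation.ReflTransGen.head ⟨hbH, kbconn_symm h2.2⟩ ih

lemma mem_of_chow {c : Fin 3} {i j k : Fin 9} {x : Tile}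
    (hx : x ∈ ({(c, i), (c, j), (c, k)} : Multiset Tile)) :
    x = (c, i) ∨ x = (c, j) ∨ x = (c, k) := by
  simpa using hx

lemma kbconn_colour {KB : Tile → ℕ} {H : Multiset Tile} {t t' : Tile}
    (h : KBConn KB H t t') : t.1 = t'.1 := by
  rcases h with rfl | ⟨u, _, c, i, j, k, _, _, hc⟩
  · rfl
  · have ht : t ∈ ({t, t', u} : Multiset Tile) := by simp
    have ht' : t' ∈ ({t, t', u} : Multiset Tile) := by simp
    rw [hc] at ht ht'
    rcases mem_of_chow ht with rfl | rfl | rfl <;>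
      rcases mem_of_chow ht' with rfl | rfl | rfl <;> rfl

/-- The full-multiplicity property of a block. -/
lemma block_count {KB : Tile → ℕ} {H b : Multiset Tile} (hb : IsKBBlock KB H b)
    {x : Tile} (hx : x ∈ b) : b.count x = H.count x :=
  le_antisymm (Multiset.count_le_of_le x hb.2.1)
    (hb.2.2.2.1 x hx x (Or.inl rfl))

/-- Points reachable from a member of a block stay in the block. -/
lemma block_closed {KB : Tile → ℕ} {H b : Multiset Tile} (hb : IsKBBlock KB H b)
    {t x : Tile} (ht : t ∈ b) (hx : Relation.ReflTransGen (KBStep KB H) t x) :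
    x ∈ b := by
  induction hx with
  | refl => exact ht
  | @tail y z h1 h2 ih =>
      have hc : H.count z ≤ b.count z := hb.2.2.2.1 y ih z h2.2
      have : 0 < b.count z := lt_of_lt_of_le (Multiset.count_pos.2 h2.1) hc
      exact Multiset.count_pos.1 this

/-- Two blocks sharing an element are equal. -/
lemma block_eq_block {KB : Tile → ℕ} {H b b' : Multiset Tile}
    (hb : IsKBBlock KB H b) (hb' : IsKBBlock KB H b')
    {t : Tile} (htb : t ∈ b) (htb' : t ∈ b') : b = b' := by
  have key : ∀ x : Tile, x ∈ b ↔ x ∈ b' := by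
    intro x
    constructor
    · intro hx
      exact block_closed hb' htb' (hb.2.2.2.2 t htb x hx)
    · intro hx
      exact block_closed hb htb (hb'.2.2.2.2 t htb' x hx)
  ext x
  by_cases hx : x ∈ b
  · rw [block_count hb hx, block_count hb' ((key x).1 hx)]
  · have hx' : x ∉ b' := fun h => hx ((key x).2 h)
    rw [Multiset.count_eq_zero.2 hx, Multiset.count_eq_zero.2 hx']

/-- The block generated by a tile of `H`. -/
noncomputable def genBlock (KB : Tile → ℕ) (H : Multiset Tile) (t : Tile) :
    Multiset Tile :=
  H.filter (fun x => Relation.ReflTransGen (KBStep KB H) t x)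

lemma mem_genBlock {KB : Tile → ℕ} {H : Multiset Tile} {t x : Tile} :
    x ∈ genBlock KB H t ↔ x ∈ H ∧ Relation.ReflTransGen (KBStep KB H) t x :=
  Multiset.mem_filter

lemma isBlock_genBlock {KB : Tile → ℕ} {H : Multiset Tile} {t : Tile} (ht : t ∈ H) :
    IsKBBlock KB H (genBlock KB H t) := by
  have htg : t ∈ genBlock KB H t := mem_genBlock.2 ⟨ht, .refl⟩
  refine ⟨fun h0 => by simp [h0] at htg, Multiset.filter_le _ _, ?_, ?_, ?_⟩
  · refine ⟨t.1, fun x hx => ?_⟩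
    have hx' := (mem_genBlock.1 hx).2
    clear hx htg
    induction hx' with
    | refl => rfl
    | tail _ h2 ih => rw [← kbconn_colour h2.2]; exact ih
  · intro x hx t' hconn
    by_cases ht' : t' ∈ H
    · have : Relation.ReflTransGen (KBStep KB H) t t' :=
        (mem_genBlock.1 hx).2.tail ⟨ht', hconn⟩
      rw [genBlock, Multiset.count_filter, if_pos this]
    · simp [Multiset.count_eq_zero.2 ht']
  · intro p hp q hq
    have hp' := (mem_genBlock.1 hp).2
    have hq' := (mem_genBlock.1 hq).2
    exact (kbstep_reverse ht hp').trans hq'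

/-- From a chow, two distinct members and the remaining tile. -/
lemma chow_third {s : Multiset Tile} (hs : IsChow s) {x y : Tile}
    (hx : x ∈ s) (hy : y ∈ s) (hxy : x ≠ y) :
    ∃ u ∈ s, IsChow ({x, y, u} : Multiset Tile) := by
  have hcard : Multiset.card s = 3 := by
    obtain ⟨c, i, j, k, _, _, rfl⟩ := hs
    rfl
  have hy' : y ∈ s.erase x := Multiset.mem_erase_of_ne (Ne.symm hxy) |>.2 hy
  have hs1 : s = x ::ₘ s.erase x := (Multiset.cons_erase hx).symm
  have hs2 : s.erase x = y ::ₘ (s.erase x).erase y := (Multiset.cons_erase hy').symm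
  have hcard2 : Multiset.card ((s.erase x).erase y) = 1 := by
    have c1 : Multiset.card (s.erase x) = 2 := by
      rw [Multiset.card_erase_of_mem hx, hcard]; rfl
    rw [Multiset.card_erase_of_mem hy', c1]; rfl
  obtain ⟨u, hu⟩ := Multiset.card_eq_one.1 hcard2
  have hse : s = ({x, y, u} : Multiset Tile) := by
    rw [hs1, hs2, hu]; rfl
  refine ⟨u, ?_, hse ▸ hs⟩
  rw [hse]; simp

/-- Any two tiles of a part of a qDCMP are KB-connected. -/
lemma part_conn {KB : Tile → ℕ} {H : Multiset Tile} {π : Multiset (Multiset Tile)}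
    (hpi : IsQDCMP KB H π) {s : Multiset Tile} (hs : s ∈ π) {x y : Tile}
    (hx : x ∈ s) (hy : y ∈ s) : KBConn KB H x y := by
  by_cases hxy : x = y
  · exact Or.inl hxy
  have hsH : s ≤ H := le_trans (Multiset.le_sum_of_mem hs) hpi.2.1
  rcases hpi.2.2.1 s hs with hm | hp | hc
  · rcases hm with ⟨w, rfl⟩ | hchow
    · have : x = w := by simpa using hx
      have : y = w := by simpa using hy
      exact absurd (by simp_all) hxy
    · obtain ⟨u, hu, hcu⟩ := chow_third hchow hx hy hxy
      exact Or.inr ⟨u, Or.inl (Multiset.mem_of_le hsH hu), hcu⟩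
  · obtain ⟨w, rfl⟩ := hp
    have hxw : x = w := by simpa using hx
    have hyw : y = w := by simpa using hy
    exact absurd (hxw.trans hyw.symm) hxy
  · obtain ⟨u, hu, hmeld⟩ := hpi.2.2.2.1 s hs hc
    rcases hmeld with ⟨w, hw⟩ | hchow
    · have hxw : x = w := by
        have : x ∈ u ::ₘ s := Multiset.mem_cons_of_mem hx
        rw [hw] at this; simpa using this
      have hyw : y = w := by
        have : y ∈ u ::ₘ s := Multiset.mem_cons_of_mem hy
        rw [hw] at this; simpa using this
      exact absurd (hxw.trans hyw.symm) hxy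
    · obtain ⟨v, hv, hcv⟩ := chow_third hchow
        (Multiset.mem_cons_of_mem hx) (Multiset.mem_cons_of_mem hy) hxy
      rcases Multiset.mem_cons.1 hv with rfl | hvs
      · exact Or.inr ⟨v, Or.inr hu, hcv⟩
      · exact Or.inr ⟨v, Or.inl (Multiset.mem_of_le hsH hvs), hcv⟩

/-- Every part of a qDCMP is nonempty. -/
lemma part_ne_zero {KB : Tile → ℕ} {H : Multiset Tile} {π : Multiset (Multiset Tile)}
    (hpi : IsQDCMP KB H π) {s : Multiset Tile} (hs : s ∈ π) : s ≠ 0 := by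
  rcases hpi.2.2.1 s hs with hm | hp | hc
  · rcases hm with ⟨w, rfl⟩ | ⟨c, i, j, k, _, _, rfl⟩ <;> simp
  · obtain ⟨w, rfl⟩ := hp; simp
  · obtain ⟨u, c, i, j, k, _, _, huc⟩ := hc
    intro h0
    rw [h0] at huc
    have : Multiset.card (u ::ₘ (0 : Multiset Tile)) = 3 := by rw [huc]; rfl
    simp at this

/-- Every part of a qDCMP lies in a unique KB-block. -/
lemma part_subset_unique_block (H : Multiset Tile) (KB : Tile → ℕ)
    (B : Finset (Multiset Tile)) (hB : ∀ b, b ∈ B ↔ IsKBBlock KB H b)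
    {π : Multiset (Multiset Tile)} (hpi : IsQDCMP KB H π)
    {s : Multiset Tile} (hs : s ∈ π) : ∃! b, b ∈ B ∧ s ≤ b := by
  obtain ⟨t, ht⟩ := Multiset.exists_mem_of_ne_zero (part_ne_zero hpi hs)
  have hsH : s ≤ H := le_trans (Multiset.le_sum_of_mem hs) hpi.2.1
  have htH : t ∈ H := Multiset.mem_of_le hsH ht
  have hblk : IsKBBlock KB H (genBlock KB H t) := isBlock_genBlock htH
  have hsb : s ≤ genBlock KB H t := by
    refine Multiset.le_iff_count.2 fun x => ?_
    by_cases hx : x ∈ s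
    · have hxH : x ∈ H := Multiset.mem_of_le hsH hx
      have hxg : x ∈ genBlock KB H t :=
        mem_genBlock.2 ⟨hxH, Relation.ReflTransGen.single ⟨hxH, part_conn hpi hs ht hx⟩⟩
      rw [block_count hblk hxg]
      exact Multiset.count_le_of_le x hsH
    · simp [Multiset.count_eq_zero.2 hx]
  have htg : t ∈ genBlock KB H t := mem_genBlock.2 ⟨htH, .refl⟩
  refine ⟨genBlock KB H t, ⟨(hB _).2 hblk, hsb⟩, ?_⟩
  rintro b ⟨hbB, hsb'⟩
  exact block_eq_block ((hB _).1 hbB) hblk (Multiset.mem_of_le hsb' ht) htg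

lemma le_sum_of_mem_multiset {s : Multiset Tile} {π : Multiset (Multiset Tile)}
    (h : s ∈ π) : s ≤ π.sum := by
  rw [← Multiset.cons_erase h, Multiset.sum_cons]
  exact Multiset.le_add_right _ _

lemma sum_filter_le_sum (p : Multiset Tile → Prop) [DecidablePred p] (π : Multiset (Multiset Tile)) :
    (π.filter p).sum ≤ π.sum := by
  conv_rhs => rw [← Multiset.filter_add_not p π]
  rw [Multiset.sum_add]
  exact Multiset.le_add_right _ _
/-- The restriction of a qDCMP of a hand `H` to each KB-block `b` is a qDCMP of `b`,
and the qDCMP is the amalgamation of its restrictions to all KB-blocks. -/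

theorem qdcmp_restrict_amalgamate (H : Multiset Tile) (KB : Tile → ℕ)
    (hH : IsKTile 13 H ∨ IsKTile 14 H) (hKB : IsKB KB)
    (B : Finset (Multiset Tile)) (hB : ∀ b, b ∈ B ↔ IsKBBlock KB H b)
    (π : Multiset (Multiset Tile)) (hpi : IsQDCMP KB H π) :
    (∀ b ∈ B, IsQDCMP KB b (restrictQ π b)) ∧
    π = ∑ b ∈ B, restrictQ π b := by
  obtain ⟨h5, hsum, htyp, hcomp, hpair1, hpair5⟩ := hpi
  have hpi' : IsQDCMP KB H π := ⟨h5, hsum, htyp, hcomp, hpair1, hpair5⟩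
  constructor
  · intro b hbB
    have hblk := (hB b).1 hbB
    refine ⟨le_trans (Multiset.card_le_card (Multiset.filter_le _ _)) h5, ?_, ?_, ?_, ?_, ?_⟩
    · refine Multiset.le_iff_count.2 fun x => ?_
      by_cases hx : x ∈ (restrictQ π b).sum
      · obtain ⟨s, hsq, hxs⟩ :=
          Multiset.mem_join.1 (show x ∈ Multiset.join (restrictQ π b) from hx)
        have hsb : s ≤ b := (Multiset.mem_filter.1 hsq).2
        have hxb : x ∈ b := Multiset.mem_of_le hsb hxs
        have hres : (restrictQ π b).sum ≤ π.sum := by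
          unfold restrictQ; exact sum_filter_le_sum _ π
        calc ((restrictQ π b).sum).count x
            ≤ π.sum.count x := Multiset.count_le_of_le x hres
          _ ≤ H.count x := Multiset.count_le_of_le x hsum
          _ = b.count x := (block_count hblk hxb).symm
      · rw [Multiset.count_eq_zero.2 hx]
        exact Nat.zero_le _
    · intro s hs
      exact htyp s (Multiset.mem_filter.1 hs).1
    · intro s hs
      exact hcomp s (Multiset.mem_filter.1 hs).1
    · exact le_trans (Multiset.card_le_card
        (Multiset.monotone_filter_left _ (Multiset.filter_le _ _))) hpair1
    · intro hc5
      have hle : restrictQ π b ≤ π := Multiset.filter_le _ _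
      have : restrictQ π b = π :=
        Multiset.eq_of_le_of_card_le hle (by rw [hc5]; exact h5)
      rw [this]
      exact hpair5 (by rw [← this, hc5])
  · ext s
    rw [Multiset.count_sum']
    by_cases hs : s ∈ π
    · obtain ⟨b0, ⟨hb0B, hsb0⟩, huniq⟩ := part_subset_unique_block H KB B hB hpi' hs
      rw [Finset.sum_eq_single_of_mem b0 hb0B]
      · rw [restrictQ, Multiset.count_filter, if_pos hsb0]
      · intro b hbB hne
        rw [restrictQ, Multiset.count_filter, if_neg]
        exact fun hsb => hne (huniq b ⟨hbB, hsb⟩)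
    · have h0 : π.count s = 0 := Multiset.count_eq_zero.2 hs
      rw [h0]
      refine (Finset.sum_eq_zero fun b _ => ?_).symm
      rw [restrictQ, Multiset.count_filter]
      simp [h0]
end

section
/- Let H be a hand, KB a knowledge base, and B the set of KB-blocks of H, and for each b ∈ B let π_b be a quasi-decomposition of b under KB. The amalgamation ⋃_{b∈B} π_b is a quasi-decomposition of H under KB provided that (i) it has at most five elements, at most one of which is an incompletable pair, and (ii) it contains at least one pair whenever it has five elements. -/
attribute [local instance] Classical.propDecidable

lemma sum_sum_aux {α : Type*} (B : Finset α) (f : α → Multiset (Multiset Tile)) :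
    (∑ b ∈ B, f b).sum = ∑ b ∈ B, (f b).sum := by
  classical
  induction B using Finset.induction_on with
  | empty => simp
  | insert _ _ hx ih =>
    rename_i a s
    rw [Finset.sum_insert hx, Finset.sum_insert hx, Multiset.sum_add, ih]

/-- The amalgamation of local qDCMPs, one per KB-block of `H`, is a qDCMP of `H`
provided it has at most five elements with at most one incompletable pair, and
contains a pair whenever it has five elements. -/
theorem qdcmp_amalgamation (H : Multiset Tile) (KB : Tile → ℕ)
    (hH : IsKTile 13 H ∨ IsKTile 14 H) (hKB : IsKB KB)
    (B : Finset (Multiset Tile)) (hB : ∀ b, b ∈ B ↔ IsKBBlock KB H b)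
    (f : Multiset Tile → Multiset (Multiset Tile))
    (hf : ∀ b ∈ B, IsQDCMP KB b (f b))
    (hcard : Multiset.card (∑ b ∈ B, f b) ≤ 5)
    (hpair : Multiset.card
        ((∑ b ∈ B, f b).filter fun s => IsPair s ∧ ¬ CompletablePmeld KB s) ≤ 1)
    (hfive : Multiset.card (∑ b ∈ B, f b) = 5 → ∃ s ∈ (∑ b ∈ B, f b), IsPair s) :
    IsQDCMP KB H (∑ b ∈ B, f b) := by
  classical
  have hblk : ∀ b ∈ B, IsKBBlock KB H b := fun b hb => (hB b).1 hb
  -- each block has full multiplicity of its tiles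
  have hcnt : ∀ b ∈ B, ∀ t ∈ b, b.count t = H.count t := by
    intro b hb t ht
    obtain ⟨_, hle, _, hcl, _⟩ := hblk b hb
    exact le_antisymm (Multiset.count_le_of_le t hle) (hcl t ht t (Or.inl rfl))
  -- two blocks sharing a tile are equal
  have key : ∀ b₁ ∈ B, ∀ b₂ ∈ B, ∀ t : Tile, t ∈ b₁ → t ∈ b₂ → b₁ ≤ b₂ := by
    intro b₁ h1 b₂ h2 t ht1 ht2
    obtain ⟨_, hle1, _, hcl1, hconn1⟩ := hblk b₁ h1
    obtain ⟨_, hle2, _, hcl2, _⟩ := hblk b₂ h2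
    have mem2' : ∀ s : Tile,
        Relation.ReflTransGen (fun x y : Tile => y ∈ H ∧ KBConn KB H x y) t s → s ∈ b₂ := by
      intro s hchain
      induction hchain with
      | refl => exact ht2
      | tail _ hrel ih =>
        rename_i x y _
        have h1 := hcl2 x ih y hrel.2
        have hyH : y ∈ H := hrel.1
        rw [← Multiset.count_pos] at hyH ⊢
        omega
    have mem2 : ∀ s ∈ b₁, s ∈ b₂ := fun s hs => mem2' s (hconn1 t ht1 s hs)
    rw [Multiset.le_iff_count]
    intro a
    by_cases ha : a ∈ b₁
    · rw [hcnt b₁ h1 a ha, hcnt b₂ h2 a (mem2 a ha)]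
    · simp [Multiset.count_eq_zero_of_notMem ha]
  have hdisj : ∀ b ∈ B, ∀ b' ∈ B, b ≠ b' → ∀ t : Tile, t ∈ b → t ∉ b' := by
    intro b hb b' hb' hne t ht ht'
    exact hne (le_antisymm (key b hb b' hb' t ht ht') (key b' hb' b hb t ht' ht))
  -- sum of the blocks is ≤ H
  have hBle : (∑ b ∈ B, b) ≤ H := by
    rw [Multiset.le_iff_count]
    intro t
    rw [Multiset.count_sum']
    by_cases hex : ∃ b ∈ B, t ∈ b
    · obtain ⟨b0, hb0, ht0⟩ := hex
      rw [Finset.sum_eq_single_of_mem b0 hb0 (fun b hb hne =>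
        Multiset.count_eq_zero_of_notMem (hdisj b0 hb0 b hb hne.symm t ht0))]
      exact le_of_eq (hcnt b0 hb0 t ht0)
    · push_neg at hex
      rw [Finset.sum_eq_zero (fun b hb => Multiset.count_eq_zero_of_notMem (hex b hb))]
      exact Nat.zero_le _
  have hsum_eq : (∑ b ∈ B, f b).sum = ∑ b ∈ B, (f b).sum :=
    sum_sum_aux B f
  refine ⟨hcard, ?_, ?_, ?_, hpair, hfive⟩
  · rw [hsum_eq]
    calc ∑ b ∈ B, (f b).sum ≤ ∑ b ∈ B, b :=
          Finset.sum_le_sum (fun b hb => (hf b hb).2.1)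
      _ ≤ H := hBle
  · intro s hs
    rw [Multiset.mem_sum] at hs
    obtain ⟨b, hb, hsb⟩ := hs
    exact (hf b hb).2.2.1 s hsb
  · intro s hs
    rw [Multiset.mem_sum] at hs
    obtain ⟨b, hb, hsb⟩ := hs
    intro hp
    exact (hf b hb).2.2.2.1 s hsb hp
end
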